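/- arXiv:2204.12570 — 4 statements merged into one kernel-verified Lean document; each statement's English description precedes it below -/
import Mathlib

section
/- Let f ∈ L¹([0,1]) and F(x) = ∫₀ˣ f(t) dt. Define P_n(f,x) = d/dx B_{n+1}(F,x) = Σ_{k=0}^n C(n,k) x^k (1-x)^{n-k} (n+1) ∫_{k/(n+1)}^{(k+1)/(n+1)} f(t) dt. Then at every Lebesgue point x ∈ (0,1) of f (i.e. every point where F'(x) = f(x)), P_n(f,x) → f(x) as n → ∞. -/
/-!
Write `F s = ∫₀ˢ f`, `m = n + 1`, `b_{m,k}` for the Bernstein basis and `G` for the first-order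
Taylor remainder of `F` at `x`. Since `x (1 - x) b_{m,k}' = (k - m x) b_{m,k}`, an Abel summation
gives `x (1 - x) (P_n(f, x) - f x) = ∑ₖ b_{m,k}(x) (k - m x) G(k / m)`. Where `|k/m - x| < δ`
we have `|G(k/m)| ≤ ε |k/m - x|`, and the second central moment `∑ₖ b_{m,k}(x) (k - m x)² = m x (1 - x)`
bounds that part by `ε x (1 - x)`; elsewhere `G` is merely bounded, and the fourth central moment,
at most `m²`, bounds the rest by `O(1 / (m δ³))`. Both moments come from the factorial moments
`∑ₖ k (k - 1) ⋯ (k - j + 1) b_{m,k}(x) = m (m - 1) ⋯ (m - j + 1) xʲ`.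
-/

open MeasureTheory Filter Set intervalIntegral

/-- The Lorentz modification of the Bernstein polynomials (the derivative of the
`(n+1)`-st Bernstein polynomial of the indefinite integral of `f`). -/
noncomputable def lorentzP (f : ℝ → ℝ) (n : ℕ) (x : ℝ) : ℝ :=
  ∑ k ∈ Finset.range (n + 1),
    (n.choose k : ℝ) * x ^ k * (1 - x) ^ (n - k) * ((n : ℝ) + 1) *
      ∫ t in ((k : ℝ) / (n + 1))..(((k : ℝ) + 1) / (n + 1)), f t

theorem Nat.cast_descFactorial_succ {R : Type*} [Ring R] (n k : ℕ) :
    ((n.descFactorial (k + 1) : ℕ) : R) = (n - k) * n.descFactorial k := by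
  rcases le_or_gt k n with h | h
  · rw [Nat.descFactorial_succ, Nat.cast_mul, Nat.cast_sub h]
  · rw [Nat.descFactorial_eq_zero_iff_lt.2 h, Nat.descFactorial_eq_zero_iff_lt.2 (by omega)]
    simp

theorem abs_mul_abs_le_sq_add_pow_four {d g ε δ M : ℝ} (hε : 0 ≤ ε) (hδ : 0 < δ) (h_bdd : |g| ≤ M)
    (h_near : |d| < δ → |g| ≤ ε * |d|) : |d| * |g| ≤ ε * d ^ 2 + M / δ ^ 3 * d ^ 4 := by
  have hM : 0 ≤ M := (abs_nonneg g).trans h_bdd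
  rcases lt_or_ge |d| δ with hd | hd
  · calc |d| * |g| ≤ |d| * (ε * |d|) := mul_le_mul_of_nonneg_left (h_near hd) (abs_nonneg d)
      _ = ε * d ^ 2 := by rw [mul_left_comm, ← sq, sq_abs]
      _ ≤ _ := le_add_of_nonneg_right (by positivity)
  · have hd4 : |d| * δ ^ 3 ≤ d ^ 4 := by
      calc |d| * δ ^ 3 ≤ |d| * |d| ^ 3 := by gcongr
        _ = d ^ 4 := by rw [← pow_succ', Even.pow_abs ⟨2, rfl⟩]
    calc |d| * |g| ≤ |d| * M := mul_le_mul_of_nonneg_left h_bdd (abs_nonneg d)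
      _ ≤ M / δ ^ 3 * d ^ 4 := by
        rw [div_mul_eq_mul_div, le_div_iff₀ (by positivity), mul_comm |d|, mul_assoc]
        exact mul_le_mul_of_nonneg_left hd4 hM
      _ ≤ _ := le_add_of_nonneg_left (by positivity)

namespace bernsteinPolynomial

variable {R : Type*} [CommRing R]

theorem eval_eq (n ν : ℕ) (x : R) :
    (bernsteinPolynomial R n ν).eval x = n.choose ν * x ^ ν * (1 - x) ^ (n - ν) := by
  simp [bernsteinPolynomial]

theorem eval_nonneg (n ν : ℕ) {x : ℝ} (hx : x ∈ Icc (0 : ℝ) 1) :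
    0 ≤ (bernsteinPolynomial ℝ n ν).eval x := by
  have hx0 := hx.1
  have hx1 : 0 ≤ 1 - x := sub_nonneg.2 hx.2
  rw [eval_eq]
  positivity

theorem sum_eval (n : ℕ) (x : R) :
    ∑ ν ∈ Finset.range (n + 1), (bernsteinPolynomial R n ν).eval x = 1 := by
  simpa [Polynomial.eval_finsetSum] using congrArg (Polynomial.eval x) (sum R n)

theorem succ_mul_eval_succ (n ν : ℕ) (x : R) :
    ((ν : R) + 1) * (bernsteinPolynomial R (n + 1) (ν + 1)).eval x
      = ((n : R) + 1) * x * (bernsteinPolynomial R n ν).eval x := by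
  have h := congrArg (Nat.cast : ℕ → R) (Nat.add_one_mul_choose_eq n ν)
  push_cast at h
  rw [eval_eq, eval_eq, Nat.add_sub_add_right]
  linear_combination (-(x ^ (ν + 1) * (1 - x) ^ (n - ν))) * h

theorem sub_mul_eval {n ν : ℕ} (h : ν ≤ n) (x : R) :
    ((n : R) + 1 - ν) * (bernsteinPolynomial R (n + 1) ν).eval x
      = ((n : R) + 1) * (1 - x) * (bernsteinPolynomial R n ν).eval x := by
  have hc := congrArg (Nat.cast : ℕ → R) (Nat.choose_mul_succ_eq n ν)
  rw [Nat.cast_mul, Nat.cast_mul, Nat.cast_sub (by omega)] at hc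
  push_cast at hc
  rw [eval_eq, eval_eq, show n + 1 - ν = n - ν + 1 by omega]
  linear_combination (-(x ^ ν * (1 - x) ^ (n - ν + 1))) * hc

theorem sum_descFactorial_mul_eval (j n : ℕ) (x : R) :
    ∑ ν ∈ Finset.range (n + 1), (ν.descFactorial j : R) * (bernsteinPolynomial R n ν).eval x
      = n.descFactorial j * x ^ j := by
  induction j generalizing n with
  | zero => simp [sum_eval]
  | succ j ih =>
    cases n with
    | zero => simp
    | succ n =>
      have hterm : ∀ ν ∈ Finset.range (n + 1),
          (((ν + 1).descFactorial (j + 1) : ℕ) : R) * (bernsteinPolynomial R (n + 1) (ν + 1)).eval x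
            = ((n : R) + 1) * x
              * ((ν.descFactorial j : R) * (bernsteinPolynomial R n ν).eval x) := by
        intro ν _
        rw [Nat.succ_descFactorial_succ, Nat.cast_mul, Nat.cast_succ, mul_right_comm,
          succ_mul_eval_succ]
        ring
      rw [Finset.sum_range_succ', Finset.sum_congr rfl hterm, ← Finset.mul_sum, ih,
        Nat.succ_descFactorial_succ]
      simp only [Nat.zero_descFactorial_succ]
      push_cast
      ring

theorem sum_eval_mul_sub_mul (n : ℕ) (x : R) (g : ℕ → R) :
    ∑ ν ∈ Finset.range (n + 2), (bernsteinPolynomial R (n + 1) ν).eval x * (ν - (n + 1) * x) * g ν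
      = ((n : R) + 1) * (x * (1 - x)) *
          ∑ ν ∈ Finset.range (n + 1), (bernsteinPolynomial R n ν).eval x * (g (ν + 1) - g ν) := by
  have h_up : ∑ ν ∈ Finset.range (n + 2), (ν : R) * (bernsteinPolynomial R (n + 1) ν).eval x * g ν
      = ((n : R) + 1) * x
        * ∑ ν ∈ Finset.range (n + 1), (bernsteinPolynomial R n ν).eval x * g (ν + 1) := by
    rw [Finset.sum_range_succ', Finset.mul_sum]
    simp only [Nat.cast_zero, zero_mul, add_zero, Nat.cast_succ]
    refine Finset.sum_congr rfl fun ν _ => ?_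
    rw [succ_mul_eval_succ]
    ring
  have h_down : ∑ ν ∈ Finset.range (n + 2),
        ((n : R) + 1 - ν) * (bernsteinPolynomial R (n + 1) ν).eval x * g ν
      = ((n : R) + 1) * (1 - x)
        * ∑ ν ∈ Finset.range (n + 1), (bernsteinPolynomial R n ν).eval x * g ν := by
    rw [Finset.sum_range_succ, Finset.mul_sum]
    simp only [Nat.cast_succ, sub_self, zero_mul, add_zero]
    refine Finset.sum_congr rfl fun ν hν => ?_
    rw [sub_mul_eval (Nat.lt_succ_iff.1 (Finset.mem_range.1 hν))]
    ring
  calc _ = (1 - x)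
          * ∑ ν ∈ Finset.range (n + 2), (ν : R) * (bernsteinPolynomial R (n + 1) ν).eval x * g ν
        - x * ∑ ν ∈ Finset.range (n + 2),
          ((n : R) + 1 - ν) * (bernsteinPolynomial R (n + 1) ν).eval x * g ν := by
        rw [Finset.mul_sum, Finset.mul_sum, ← Finset.sum_sub_distrib]
        exact Finset.sum_congr rfl fun ν _ => by ring
    _ = _ := by
        rw [h_up, h_down]
        simp only [mul_sub, Finset.sum_sub_distrib]
        ring

theorem sum_eval_mul_sub_sq (n : ℕ) (x : R) :
    ∑ ν ∈ Finset.range (n + 1), (bernsteinPolynomial R n ν).eval x * (ν - n * x) ^ 2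
      = n * x * (1 - x) := by
  have hd := fun j => sum_descFactorial_mul_eval (R := R) j n x
  have key : ∀ ν : ℕ, (bernsteinPolynomial R n ν).eval x * (ν - n * x) ^ 2
      = (ν.descFactorial 2 : R) * (bernsteinPolynomial R n ν).eval x
        + ((1 - 2 * n * x) * ((ν.descFactorial 1 : R) * (bernsteinPolynomial R n ν).eval x)
        + (n * x) ^ 2 * ((ν.descFactorial 0 : R) * (bernsteinPolynomial R n ν).eval x)) := by
    intro ν
    simp only [Nat.cast_descFactorial_succ, Nat.descFactorial_zero, Nat.cast_one]
    ring
  rw [Finset.sum_congr rfl fun ν _ => key ν]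
  simp only [Finset.sum_add_distrib, ← Finset.mul_sum, hd]
  simp only [Nat.cast_descFactorial_succ, Nat.descFactorial_zero, Nat.cast_one]
  ring

theorem sum_eval_mul_sub_pow_four (n : ℕ) (x : R) :
    ∑ ν ∈ Finset.range (n + 1), (bernsteinPolynomial R n ν).eval x * (ν - n * x) ^ 4
      = n * x * (1 - x) * (1 + 3 * (n - 2) * x * (1 - x)) := by
  have hd := fun j => sum_descFactorial_mul_eval (R := R) j n x
  set a : R := n * x
  -- the coefficients come from `νʲ = ∑ᵢ S(j, i) ν.descFactorial i`, `S` the Stirling numbers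
  have key : ∀ ν : ℕ, (bernsteinPolynomial R n ν).eval x * (ν - a) ^ 4
      = (ν.descFactorial 4 : R) * (bernsteinPolynomial R n ν).eval x
        + ((6 - 4 * a) * ((ν.descFactorial 3 : R) * (bernsteinPolynomial R n ν).eval x)
        + ((7 - 12 * a + 6 * a ^ 2) * ((ν.descFactorial 2 : R) * (bernsteinPolynomial R n ν).eval x)
        + ((1 - 4 * a + 6 * a ^ 2 - 4 * a ^ 3) *
            ((ν.descFactorial 1 : R) * (bernsteinPolynomial R n ν).eval x)
        + a ^ 4 * ((ν.descFactorial 0 : R) * (bernsteinPolynomial R n ν).eval x)))) := by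
    intro ν
    simp only [Nat.cast_descFactorial_succ, Nat.descFactorial_zero, Nat.cast_one]
    ring
  rw [Finset.sum_congr rfl fun ν _ => key ν]
  simp only [Finset.sum_add_distrib, ← Finset.mul_sum, hd]
  simp only [Nat.cast_descFactorial_succ, Nat.descFactorial_zero, Nat.cast_one, a]
  ring

theorem sum_eval_mul_sub_pow_four_le (n : ℕ) {x : ℝ} (hx : x ∈ Icc (0 : ℝ) 1) :
    ∑ ν ∈ Finset.range (n + 1), (bernsteinPolynomial ℝ n ν).eval x * (ν - n * x) ^ 4 ≤ n ^ 2 := by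
  rw [sum_eval_mul_sub_pow_four, mul_assoc _ x, mul_assoc _ x]
  set u := x * (1 - x)
  have hu : 0 ≤ u := mul_nonneg hx.1 (sub_nonneg.2 hx.2)
  have hu' : u ≤ 1 / 4 := by nlinarith [sq_nonneg (2 * x - 1)]
  have hn : (n : ℝ) ≤ n ^ 2 := by exact_mod_cast Nat.le_self_pow two_ne_zero n
  have hnu : n * u ≤ n / 4 := by nlinarith [n.cast_nonneg (α := ℝ)]
  calc n * u * (1 + 3 * (n - 2) * u) ≤ n * u + 3 * (n * u) ^ 2 := by
        nlinarith [mul_nonneg (mul_nonneg (n.cast_nonneg (α := ℝ)) hu) hu]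
    _ ≤ n / 4 + 3 * (n / 4) ^ 2 := by gcongr
    _ ≤ n ^ 2 := by nlinarith

theorem abs_sum_eval_mul_sub_mul_le {m : ℕ} (hm : 0 < m) {x : ℝ} (hx : x ∈ Icc (0 : ℝ) 1)
    {G : ℝ → ℝ} {ε δ M : ℝ} (hε : 0 ≤ ε) (hδ : 0 < δ) (hG_bdd : ∀ s ∈ Icc (0 : ℝ) 1, |G s| ≤ M)
    (hG_near : ∀ s, |s - x| < δ → |G s| ≤ ε * |s - x|) :
    |∑ ν ∈ Finset.range (m + 1), (bernsteinPolynomial ℝ m ν).eval x * (ν - m * x) * G (ν / m)|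
      ≤ ε * (x * (1 - x)) + M / δ ^ 3 / m := by
  have hm' : (0 : ℝ) < m := Nat.cast_pos.2 hm
  have hterm : ∀ ν ∈ Finset.range (m + 1),
      |(bernsteinPolynomial ℝ m ν).eval x * (ν - m * x) * G (ν / m)|
        ≤ ε / m * ((bernsteinPolynomial ℝ m ν).eval x * (ν - m * x) ^ 2)
          + M / δ ^ 3 / m ^ 3 * ((bernsteinPolynomial ℝ m ν).eval x * (ν - m * x) ^ 4) := by
    intro ν hν
    have hν_le : (ν : ℝ) ≤ m := by exact_mod_cast Nat.lt_succ_iff.1 (Finset.mem_range.1 hν)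
    have hν_mem : (ν : ℝ) / m ∈ Icc (0 : ℝ) 1 := ⟨by positivity, div_le_one_of_le₀ hν_le hm'.le⟩
    have hd : (ν : ℝ) - m * x = m * (ν / m - x) := by field_simp
    have hb := eval_nonneg m ν hx
    have key := abs_mul_abs_le_sq_add_pow_four hε hδ (hG_bdd _ hν_mem) (hG_near (ν / m))
    rw [abs_mul, abs_mul, abs_of_nonneg hb, hd, abs_mul, abs_of_pos hm']
    calc _ = m * (bernsteinPolynomial ℝ m ν).eval x * (|(ν : ℝ) / m - x| * |G (ν / m)|) := by ring
      _ ≤ m * (bernsteinPolynomial ℝ m ν).eval x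
            * (ε * (ν / m - x) ^ 2 + M / δ ^ 3 * (ν / m - x) ^ 4) := by gcongr
      _ = _ := by field_simp
  calc _ ≤ ∑ ν ∈ Finset.range (m + 1),
        |(bernsteinPolynomial ℝ m ν).eval x * (ν - m * x) * G (ν / m)| :=
        Finset.abs_sum_le_sum_abs _ _
    _ ≤ ε / m * ∑ ν ∈ Finset.range (m + 1), (bernsteinPolynomial ℝ m ν).eval x * (ν - m * x) ^ 2
        + M / δ ^ 3 / m ^ 3
          * ∑ ν ∈ Finset.range (m + 1), (bernsteinPolynomial ℝ m ν).eval x * (ν - m * x) ^ 4 := by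
        rw [Finset.mul_sum, Finset.mul_sum, ← Finset.sum_add_distrib]
        exact Finset.sum_le_sum hterm
    _ ≤ ε / m * (m * x * (1 - x)) + M / δ ^ 3 / m ^ 3 * m ^ 2 := by
        rw [sum_eval_mul_sub_sq]
        have hM : 0 ≤ M := (abs_nonneg _).trans (hG_bdd x hx)
        gcongr
        exact sum_eval_mul_sub_pow_four_le m hx
    _ = _ := by field_simp

end bernsteinPolynomial

theorem tendsto_of_forall_dist_le_add_div {α : Type*} [PseudoMetricSpace α] {u : ℕ → α} {a : α}
    (h : ∀ ε > 0, ∃ C, ∀ n : ℕ, dist (u n) a ≤ ε + C / (n + 1)) : Tendsto u atTop (nhds a) := by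
  refine Metric.tendsto_atTop.2 fun ε hε => ?_
  obtain ⟨C, hC⟩ := h (ε / 2) (half_pos hε)
  obtain ⟨N, hN⟩ := exists_nat_gt (2 * C / ε)
  refine ⟨N, fun n hn => (hC n).trans_lt ?_⟩
  have hn : (N : ℝ) ≤ n := by exact_mod_cast hn
  have : C / (n + 1) < ε / 2 := by
    rw [div_lt_iff₀ (by positivity)]
    rw [div_lt_iff₀ hε] at hN
    nlinarith
  linarith

theorem abs_intervalIntegral_le_integral_abs {f : ℝ → ℝ} {a b c d : ℝ}
    (hf : IntegrableOn f (Icc a b)) (hc : c ∈ Icc a b) (hd : d ∈ Icc a b) :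
    |∫ t in c..d, f t| ≤ ∫ t in Icc a b, |f t| :=
  (norm_integral_le_integral_norm_uIoc (f := f) (μ := volume)).trans <|
    setIntegral_mono_set hf.norm (Eventually.of_forall fun _ => norm_nonneg _)
      (uIoc_subset_uIcc.trans (uIcc_subset_Icc hc hd)).eventuallyLE

noncomputable def primitiveRemainder (f : ℝ → ℝ) (x s : ℝ) : ℝ :=
  (∫ t in (0 : ℝ)..s, f t) - (∫ t in (0 : ℝ)..x, f t) - f x * (s - x)

theorem abs_primitiveRemainder_le {f : ℝ → ℝ} (hf : IntegrableOn f (Icc 0 1)) {x s : ℝ}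
    (hx : x ∈ Icc (0 : ℝ) 1) (hs : s ∈ Icc (0 : ℝ) 1) :
    |primitiveRemainder f x s| ≤ (∫ t in Icc (0 : ℝ) 1, |f t|) + |f x| := by
  have h0 : (0 : ℝ) ∈ Icc (0 : ℝ) 1 := left_mem_Icc.2 zero_le_one
  have hsx : |s - x| ≤ 1 := abs_sub_le_iff.2 ⟨by linarith [hs.2, hx.1], by linarith [hx.2, hs.1]⟩
  rw [primitiveRemainder, integral_interval_sub_left
    (hf.mono_set (uIcc_subset_Icc h0 hs)).intervalIntegrable
    (hf.mono_set (uIcc_subset_Icc h0 hx)).intervalIntegrable]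
  calc _ ≤ |∫ t in x..s, f t| + |f x * (s - x)| := abs_sub _ _
    _ ≤ _ := by
      rw [abs_mul]
      gcongr
      · exact abs_intervalIntegral_le_integral_abs hf hx hs
      · exact mul_le_of_le_one_right (abs_nonneg _) hsx

theorem exists_pos_abs_primitiveRemainder_le {f : ℝ → ℝ} {x ε : ℝ}
    (hF : HasDerivAt (fun s => ∫ t in (0 : ℝ)..s, f t) (f x) x) (hε : 0 < ε) :
    ∃ δ > 0, ∀ s, |s - x| < δ → |primitiveRemainder f x s| ≤ ε * |s - x| := by
  obtain ⟨δ, hδ, h⟩ := Metric.eventually_nhds_iff.1 ((hasDerivAt_iff_isLittleO.1 hF).def hε)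
  refine ⟨δ, hδ, fun s hs => ?_⟩
  simpa [primitiveRemainder, mul_comm (f x)] using h (show dist s x < δ from hs)

theorem lorentzP_eq_sum {f : ℝ → ℝ} (hf : IntegrableOn f (Icc 0 1)) (n : ℕ) (x : ℝ) :
    lorentzP f n x = ((n : ℝ) + 1) * ∑ ν ∈ Finset.range (n + 1),
      (bernsteinPolynomial ℝ n ν).eval x
        * ((∫ t in (0 : ℝ)..(ν + 1) / (n + 1), f t) - ∫ t in (0 : ℝ)..ν / (n + 1), f t) := by
  rw [lorentzP, Finset.mul_sum]
  refine Finset.sum_congr rfl fun ν hν => ?_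
  have hν : (ν : ℝ) + 1 ≤ n + 1 := by
    exact_mod_cast Nat.succ_le_succ (Nat.lt_succ_iff.1 (Finset.mem_range.1 hν))
  have hmem : ∀ {a : ℝ}, 0 ≤ a → a ≤ ν + 1 → a / (n + 1) ∈ Icc (0 : ℝ) 1 := fun ha ha' =>
    ⟨by positivity, div_le_one_of_le₀ (ha'.trans hν) (by positivity)⟩
  have h0 : (0 : ℝ) ∈ Icc (0 : ℝ) 1 := left_mem_Icc.2 zero_le_one
  rw [integral_interval_sub_left
    (hf.mono_set (uIcc_subset_Icc h0 (hmem (by positivity) le_rfl))).intervalIntegrable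
    (hf.mono_set (uIcc_subset_Icc h0 (hmem ν.cast_nonneg (by linarith)))).intervalIntegrable,
    bernsteinPolynomial.eval_eq]
  ring

theorem mul_lorentzP_sub_eq_sum {f : ℝ → ℝ} (hf : IntegrableOn f (Icc 0 1)) (n : ℕ) (x : ℝ) :
    x * (1 - x) * (lorentzP f n x - f x) = ∑ ν ∈ Finset.range (n + 2),
      (bernsteinPolynomial ℝ (n + 1) ν).eval x * (ν - (n + 1) * x)
        * primitiveRemainder f x (ν / (n + 1)) := by
  have hstep : ∀ ν : ℕ, primitiveRemainder f x (((ν + 1 : ℕ) : ℝ) / (n + 1))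
      - primitiveRemainder f x (ν / (n + 1))
      = ((∫ t in (0 : ℝ)..(ν + 1) / (n + 1), f t) - ∫ t in (0 : ℝ)..ν / (n + 1), f t)
        - f x / (n + 1) := by
    intro ν
    simp only [primitiveRemainder, Nat.cast_succ]
    field_simp
    ring
  rw [bernsteinPolynomial.sum_eval_mul_sub_mul n x fun ν => primitiveRemainder f x (ν / (n + 1)),
    lorentzP_eq_sum hf]
  simp only [hstep, mul_sub, Finset.sum_sub_distrib, ← Finset.sum_mul,
    bernsteinPolynomial.sum_eval]
  field_simp

/-- Lorentz: if `f ∈ L¹[0,1]`, `F(x) = ∫₀ˣ f`, then at every point `x ∈ (0,1)` where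
`F'(x) = f(x)` (i.e. almost everywhere), `P_n(f,x) → f(x)`. -/
theorem lorentzP_tendsto (f : ℝ → ℝ) (hf : IntegrableOn f (Set.Icc 0 1))
    (x : ℝ) (hx : x ∈ Set.Ioo (0 : ℝ) 1)
    (hF : HasDerivAt (fun s => ∫ t in (0 : ℝ)..s, f t) (f x) x) :
    Tendsto (fun n => lorentzP f n x) atTop (nhds (f x)) := by
  obtain ⟨hx0, hx1⟩ := hx
  have hx' : x ∈ Icc (0 : ℝ) 1 := ⟨hx0.le, hx1.le⟩
  have hu : 0 < x * (1 - x) := mul_pos hx0 (sub_pos.2 hx1)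
  refine tendsto_of_forall_dist_le_add_div fun ε hε => ?_
  obtain ⟨δ, hδ, h_near⟩ := exists_pos_abs_primitiveRemainder_le hF hε
  refine ⟨((∫ t in Icc (0 : ℝ) 1, |f t|) + |f x|) / δ ^ 3 / (x * (1 - x)), fun n => ?_⟩
  have h := bernsteinPolynomial.abs_sum_eval_mul_sub_mul_le n.succ_pos hx' hε.le hδ
    (fun s hs => abs_primitiveRemainder_le hf hx' hs) h_near
  push_cast at h
  rw [← mul_lorentzP_sub_eq_sum hf, abs_mul, abs_of_pos hu] at h
  rw [Real.dist_eq, ← mul_le_mul_iff_of_pos_left hu]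
  exact h.trans_eq (by field_simp)
end

section
/- Let f : ℝ² → ℝ be bounded and Borel, vanishing outside K = [0,1]², such that the classical partial derivative ∂f/∂x₁ exists at every point of K and belongs to L¹(K). Then ∫₀¹∫₀¹ | n(f(x₁ + 1/n, x₂) − f(x₁, x₂)) − ∂f/∂x₁(x₁, x₂) | dx₁ dx₂ → 0 as n → ∞. -/
/-!
Extended by `0` off `K`, the function `f` is differentiable in `x₁` at every point of the plane,
with derivative `F₁ = 𝟙_K ∂₁f`. Writing `f (x₁ + h) x₂ - f x₁ x₂ = ∫₀ʰ F₁ (x₁ + s, x₂) ds` and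
applying Tonelli gives `‖Dₙ f‖_{L¹(ℝ²)} ≤ ‖F₁‖_{L¹(ℝ²)}` for the difference quotients `Dₙ f`, which
also converge to `F₁` pointwise. Scheffé's lemma turns pointwise convergence plus this norm bound
into convergence in `L¹(ℝ²)`, and the integral over `K` is bounded by the one over the plane.
-/

open MeasureTheory Filter Set
open scoped ENNReal Topology

theorem tendsto_integral_norm_sub_of_lintegral_enorm_le {α E : Type*} [MeasurableSpace α]
    {μ : Measure α} [NormedAddCommGroup E] {F : ℕ → α → E} {f : α → E}
    (hF : ∀ n, AEStronglyMeasurable (F n) μ) (hf : Integrable f μ)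
    (hlim : ∀ᵐ x ∂μ, Tendsto (fun n => F n x) atTop (𝓝 (f x)))
    (hle : ∀ n, ∫⁻ x, ‖F n x‖ₑ ∂μ ≤ ∫⁻ x, ‖f x‖ₑ ∂μ) :
    Tendsto (fun n => ∫ x, ‖F n x - f x‖ ∂μ) atTop (𝓝 0) := by
  have hFi : ∀ n, Integrable (F n) μ := fun n => ⟨hF n, (hle n).trans_lt hf.2⟩
  -- `‖F n - f‖ - ‖F n‖ + ‖f‖` lies in `[0, 2‖f‖]` and tends to `0`: dominated convergence applies.
  set φ : ℕ → α → ℝ := fun n x => ‖F n x - f x‖ - ‖F n x‖ + ‖f x‖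
  have hφi : ∀ n, Integrable (φ n) μ := fun n =>
    (((hFi n).sub hf).norm.sub (hFi n).norm).add hf.norm
  have hφ : Tendsto (fun n => ∫ x, φ n x ∂μ) atTop (𝓝 0) := by
    have hdom := tendsto_integral_of_dominated_convergence (fun x => 2 * ‖f x‖)
      (fun n => (hφi n).aestronglyMeasurable) (hf.norm.const_mul 2)
      (fun n => ae_of_all _ fun x => ?_)
      (hlim.mono fun x hx => ((hx.sub_const (f x)).norm.sub hx.norm).add_const ‖f x‖)
    · simpa using hdom
    rw [Real.norm_eq_abs, abs_le]
    constructor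
    · linarith [norm_sub_norm_le (F n x) (f x), norm_nonneg (f x)]
    · linarith [norm_sub_le (F n x) (f x)]
  refine squeeze_zero (fun n => integral_nonneg fun x => norm_nonneg _) (fun n => ?_) hφ
  have hnorm : ∫ x, ‖F n x‖ ∂μ ≤ ∫ x, ‖f x‖ ∂μ := by
    rw [integral_norm_eq_lintegral_enorm (hF n),
      integral_norm_eq_lintegral_enorm hf.aestronglyMeasurable]
    exact ENNReal.toReal_mono hf.2.ne (hle n)
  have hdiff : Integrable (fun x => ‖F n x - f x‖) μ := ((hFi n).sub hf).norm
  have hsplit : ∫ x, φ n x ∂μ = ∫ x, ‖F n x - f x‖ ∂μ - ∫ x, ‖F n x‖ ∂μ + ∫ x, ‖f x‖ ∂μ := by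
    have hdiff' : Integrable (fun x => ‖F n x - f x‖ - ‖F n x‖) μ := hdiff.sub (hFi n).norm
    rw [integral_add hdiff' hf.norm, integral_sub hdiff (hFi n).norm]
  linarith

theorem hasDerivAt_indicator_of_isClosed {𝕜 F : Type*} [NontriviallyNormedField 𝕜]
    [NormedAddCommGroup F] [NormedSpace 𝕜 F] {v g : 𝕜 → F} {s : Set 𝕜} (hs : IsClosed s)
    (hv : ∀ x ∉ s, v x = 0) (hg : ∀ x ∈ s, HasDerivAt v (g x) x) (x : 𝕜) :
    HasDerivAt v (s.indicator g x) x := by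
  by_cases hx : x ∈ s
  · simpa [hx] using hg x hx
  · rw [indicator_of_notMem hx]
    refine (hasDerivAt_const x 0).congr_of_eventuallyEq ?_
    filter_upwards [hs.isOpen_compl.mem_nhds hx] with y hy using hv y hy

theorem intervalIntegral_intervalIntegral_le_integral {φ : ℝ × ℝ → ℝ} (hφ : Integrable φ)
    (hφ0 : 0 ≤ φ) {a b c d : ℝ} (hab : a ≤ b) (hcd : c ≤ d) :
    ∫ x in a..b, ∫ y in c..d, φ (x, y) ≤ ∫ p, φ p := by
  simp_rw [intervalIntegral.integral_of_le hab, intervalIntegral.integral_of_le hcd]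
  rw [← setIntegral_prod _ (by rw [← Measure.volume_eq_prod]; exact hφ.integrableOn),
    ← Measure.volume_eq_prod]
  exact setIntegral_le_integral hφ (ae_of_all _ hφ0)

section DiffQuot

variable {E : Type*} [NormedAddCommGroup E] [NormedSpace ℝ E]

theorem HasDerivAt.tendsto_natCast_smul_sub {u : ℝ → E} {d : E} {x : ℝ}
    (h : HasDerivAt u d x) :
    Tendsto (fun n : ℕ => (n : ℝ) • (u (x + 1 / n) - u x)) atTop (𝓝 d) := by
  have hinv : Tendsto (fun n : ℕ => 1 / (n : ℝ)) atTop (𝓝[>] 0) :=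
    tendsto_nhdsWithin_iff.2 ⟨tendsto_one_div_atTop_nhds_zero_nat,
      (eventually_gt_atTop 0).mono fun n hn => by simp [hn]⟩
  exact (h.tendsto_slope_zero_right.comp hinv).congr fun n => by simp

noncomputable def fstDiffQuot (f : ℝ → ℝ → E) (n : ℕ) (p : ℝ × ℝ) : E :=
  (n : ℝ) • (f (p.1 + 1 / n) p.2 - f p.1 p.2)

theorem MeasureTheory.StronglyMeasurable.fstDiffQuot {f : ℝ → ℝ → E}
    (hf : StronglyMeasurable (Function.uncurry f)) (n : ℕ) :
    StronglyMeasurable (fstDiffQuot f n) :=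
  ((hf.comp_measurable ((measurable_fst.add_const _).prodMk measurable_snd)).sub hf).const_smul _

variable [CompleteSpace E]

theorem lintegral_enorm_comp_add_sub_le {u g : ℝ → E}
    (hu : ∀ x, HasDerivAt u (g x) x) {h : ℝ} (hh : 0 ≤ h) :
    ∫⁻ x, ‖u (x + h) - u x‖ₑ ≤ ENNReal.ofReal h * ∫⁻ x, ‖g x‖ₑ := by
  have hg : g = deriv u := funext fun x => (hu x).deriv.symm
  have hgm : StronglyMeasurable g := hg ▸ stronglyMeasurable_deriv u
  by_cases hgi : Integrable g
  · have hincr : ∀ x, ‖u (x + h) - u x‖ₑ ≤ ∫⁻ s in Ioc 0 h, ‖g (x + s)‖ₑ := by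
      intro x
      have hftc : u (x + h) - u x = ∫ s in 0..h, g (x + s) := by
        rw [intervalIntegral.integral_comp_add_left, add_zero,
          intervalIntegral.integral_eq_sub_of_hasDerivAt (fun t _ => hu t) hgi.intervalIntegrable]
      rw [hftc, intervalIntegral.integral_of_le hh]
      exact enorm_integral_le_lintegral_enorm _
    calc ∫⁻ x, ‖u (x + h) - u x‖ₑ ≤ ∫⁻ x, ∫⁻ s in Ioc 0 h, ‖g (x + s)‖ₑ := lintegral_mono hincr
      _ = ∫⁻ s in Ioc 0 h, ∫⁻ x, ‖g (x + s)‖ₑ :=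
        lintegral_lintegral_swap (hgm.enorm.comp measurable_add).aemeasurable
      _ = ENNReal.ofReal h * ∫⁻ x, ‖g x‖ₑ := by
        simp_rw [lintegral_add_right_eq_self (fun x => ‖g x‖ₑ)]
        simp [Real.volume_Ioc, mul_comm]
  · have hinf : ∫⁻ x, ‖g x‖ₑ = ∞ := by
      contrapose! hgi
      exact ⟨hgm.aestronglyMeasurable, hgi.lt_top⟩
    rcases hh.eq_or_lt with rfl | hpos
    · simp
    · simp [hinf, hpos]

theorem lintegral_enorm_natCast_smul_sub_le {u g : ℝ → E}
    (hu : ∀ x, HasDerivAt u (g x) x) (n : ℕ) :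
    ∫⁻ x, ‖(n : ℝ) • (u (x + 1 / n) - u x)‖ₑ ≤ ∫⁻ x, ‖g x‖ₑ := by
  rcases n.eq_zero_or_pos with rfl | hn
  · simp
  simp_rw [enorm_smul]
  rw [lintegral_const_mul' _ _ enorm_ne_top]
  calc ‖(n : ℝ)‖ₑ * ∫⁻ x, ‖u (x + 1 / n) - u x‖ₑ
      ≤ ‖(n : ℝ)‖ₑ * (ENNReal.ofReal (1 / n) * ∫⁻ x, ‖g x‖ₑ) := by
        gcongr
        exact lintegral_enorm_comp_add_sub_le hu (by positivity)
    _ = ∫⁻ x, ‖g x‖ₑ := by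
        rw [← mul_assoc, ← ofReal_norm, ← ENNReal.ofReal_mul (norm_nonneg _)]
        simp [hn.ne']

variable {f : ℝ → ℝ → E} {g : ℝ × ℝ → E}

theorem lintegral_enorm_fstDiffQuot_le (hf : StronglyMeasurable (Function.uncurry f))
    (hfg : ∀ x₁ x₂, HasDerivAt (fun t => f t x₂) (g (x₁, x₂)) x₁)
    (hg : AEStronglyMeasurable g) (n : ℕ) :
    ∫⁻ p, ‖fstDiffQuot f n p‖ₑ ≤ ∫⁻ p, ‖g p‖ₑ := by
  rw [Measure.volume_eq_prod, lintegral_prod_symm _ (hf.fstDiffQuot n).enorm.aemeasurable,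
    lintegral_prod_symm _ hg.enorm]
  exact lintegral_mono fun x₂ => lintegral_enorm_natCast_smul_sub_le (hfg · x₂) n

theorem integrable_fstDiffQuot (hf : StronglyMeasurable (Function.uncurry f))
    (hfg : ∀ x₁ x₂, HasDerivAt (fun t => f t x₂) (g (x₁, x₂)) x₁)
    (hg : Integrable g) (n : ℕ) : Integrable (fstDiffQuot f n) :=
  ⟨(hf.fstDiffQuot n).aestronglyMeasurable,
    (lintegral_enorm_fstDiffQuot_le hf hfg hg.1 n).trans_lt hg.2⟩

theorem tendsto_integral_norm_fstDiffQuot_sub (hf : StronglyMeasurable (Function.uncurry f))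
    (hfg : ∀ x₁ x₂, HasDerivAt (fun t => f t x₂) (g (x₁, x₂)) x₁)
    (hg : Integrable g) :
    Tendsto (fun n => ∫ p, ‖fstDiffQuot f n p - g p‖) atTop (𝓝 0) :=
  tendsto_integral_norm_sub_of_lintegral_enorm_le
    (fun n => (hf.fstDiffQuot n).aestronglyMeasurable) hg
    (ae_of_all _ fun p => (hfg p.1 p.2).tendsto_natCast_smul_sub)
    (lintegral_enorm_fstDiffQuot_le hf hfg hg.1)

end DiffQuot

theorem diff_quotient_x1_L1_tendsto_general (f f₁ : ℝ → ℝ → ℝ)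
    (hmeas : Measurable (Function.uncurry f))
    (hsupp : ∀ x₁ x₂ : ℝ, (x₁, x₂) ∉ Set.Icc (0 : ℝ) 1 ×ˢ Set.Icc (0 : ℝ) 1 → f x₁ x₂ = 0)
    (hderiv : ∀ x₁ x₂ : ℝ, (x₁, x₂) ∈ Set.Icc (0 : ℝ) 1 ×ˢ Set.Icc (0 : ℝ) 1 →
      HasDerivAt (fun t => f t x₂) (f₁ x₁ x₂) x₁)
    (hint : IntegrableOn (Function.uncurry f₁) (Set.Icc (0 : ℝ) 1 ×ˢ Set.Icc (0 : ℝ) 1)) :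
    Tendsto (fun n : ℕ =>
        ∫ x₁ in (0 : ℝ)..1, ∫ x₂ in (0 : ℝ)..1,
          |(n : ℝ) * (f (x₁ + 1 / n) x₂ - f x₁ x₂) - f₁ x₁ x₂|)
      atTop (nhds 0) := by
  set K := Icc (0 : ℝ) 1 ×ˢ Icc (0 : ℝ) 1
  set F₁ := K.indicator (Function.uncurry f₁)
  have hK : IsClosed K := isClosed_Icc.prod isClosed_Icc
  have hF₁ : Integrable F₁ := (integrable_indicator_iff hK.measurableSet).2 hint
  have hslice : ∀ x₁ x₂, HasDerivAt (fun t => f t x₂) (F₁ (x₁, x₂)) x₁ := fun x₁ x₂ =>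
    hasDerivAt_indicator_of_isClosed (hK.preimage (.prodMk_left x₂))
      (hsupp · x₂) (hderiv · x₂) x₁
  have hf := hmeas.stronglyMeasurable
  refine squeeze_zero (fun n => ?_) (fun n => ?_)
    (tendsto_integral_norm_fstDiffQuot_sub hf hslice hF₁)
  · exact intervalIntegral.integral_nonneg zero_le_one fun x₁ _ =>
      intervalIntegral.integral_nonneg zero_le_one fun _ _ => abs_nonneg _
  calc _
      = ∫ x₁ in (0 : ℝ)..1, ∫ x₂ in (0 : ℝ)..1, ‖fstDiffQuot f n (x₁, x₂) - F₁ (x₁, x₂)‖ := by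
        refine intervalIntegral.integral_congr fun x₁ hx₁ =>
          intervalIntegral.integral_congr fun x₂ hx₂ => ?_
        rw [uIcc_of_le zero_le_one] at hx₁ hx₂
        rw [Real.norm_eq_abs, show F₁ (x₁, x₂) = f₁ x₁ x₂ from
          indicator_of_mem (show (x₁, x₂) ∈ K from ⟨hx₁, hx₂⟩) _]
        rfl
    _ ≤ ∫ p, ‖fstDiffQuot f n p - F₁ p‖ :=
        intervalIntegral_intervalIntegral_le_integral
          ((integrable_fstDiffQuot hf hslice hF₁ n).sub hF₁).norm
          (fun p => norm_nonneg _) zero_le_one zero_le_one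

/-- If `f` is bounded Borel on `K = [0,1]²`, vanishing outside `K`, and the classical partial
derivative `∂f/∂x₁` exists at every point of `K` and is integrable on `K`, then the `L¹`-norm of
the difference quotient minus the derivative tends to `0`. -/
theorem diff_quotient_x1_L1_tendsto (f f₁ : ℝ → ℝ → ℝ) (M : ℝ)
    (hmeas : Measurable (Function.uncurry f))
    (hbd : ∀ x₁ x₂ : ℝ, |f x₁ x₂| ≤ M)
    (hsupp : ∀ x₁ x₂ : ℝ, (x₁, x₂) ∉ Set.Icc (0 : ℝ) 1 ×ˢ Set.Icc (0 : ℝ) 1 → f x₁ x₂ = 0)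
    (hderiv : ∀ x₁ x₂ : ℝ, (x₁, x₂) ∈ Set.Icc (0 : ℝ) 1 ×ˢ Set.Icc (0 : ℝ) 1 →
      HasDerivAt (fun t => f t x₂) (f₁ x₁ x₂) x₁)
    (hint : IntegrableOn (Function.uncurry f₁) (Set.Icc (0 : ℝ) 1 ×ˢ Set.Icc (0 : ℝ) 1)) :
    Tendsto (fun n : ℕ =>
        ∫ x₁ in (0 : ℝ)..1, ∫ x₂ in (0 : ℝ)..1,
          |(n : ℝ) * (f (x₁ + 1 / n) x₂ - f x₁ x₂) - f₁ x₁ x₂|)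
      atTop (nhds 0) :=
  diff_quotient_x1_L1_tendsto_general f f₁ hmeas hsupp hderiv hint
end

section
/- Suppose f : ℝ² → ℝ bounded Borel on K = [0,1]² (extended by 0) has classical partial derivatives f_{x₁}, f_{x₂} everywhere on K in L¹(K), and both classical mixed second derivatives f_{x₁x₂} = ∂/∂x₁(∂f/∂x₂) and f_{x₂x₁} = ∂/∂x₂(∂f/∂x₁) exist everywhere on K and lie in L¹(K). Then f_{x₁x₂}(x₁,x₂) = f_{x₂x₁}(x₁,x₂) for Lebesgue-almost every (x₁,x₂) ∈ K. -/
open MeasureTheory Filter Set Topology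

/-! Integrating `f₁₂ = ∂₁∂₂f` and `f₂₁ = ∂₂∂₁f` over a rectangle `(a, b] × (c, d]` by Fubini and
the fundamental theorem of calculus gives in both cases the second difference
`f b d - f b c - f a d + f a c`, as soon as the slices of `f₁` and `f₂` through the corners are
integrable, which holds for almost every choice of corners. So `f₁₂ - f₂₁` is integrable with
vanishing integrals over these rectangles, and the Lebesgue differentiation theorem, applied in
one variable and then in the other, shows that it vanishes almost everywhere. -/

theorem Icc_subset_closure_of_ae_mem {a b : ℝ} {S : Set ℝ} (hab : a < b)
    (hS : ∀ᵐ x ∂volume.restrict (Icc a b), x ∈ S) : Icc a b ⊆ closure S := by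
  intro x hx
  rw [mem_closure_iff]
  intro U hU hxU
  by_contra hUS
  have hne : (U ∩ Ioo a b).Nonempty :=
    mem_closure_iff.1 (by rwa [closure_Ioo hab.ne]) U hU hxU
  have hnull : volume (U ∩ Ioo a b) = 0 := by
    have hsub : U ∩ Ioo a b ⊆ {y | y ∉ S} ∩ Icc a b := fun y hy =>
      ⟨fun hyS => hUS ⟨y, hy.1, hyS⟩, Ioo_subset_Icc_self hy.2⟩
    exact measure_mono_null hsub
      ((Measure.restrict_apply' measurableSet_Icc).symm.trans (ae_iff.1 hS))
  exact ((hU.inter isOpen_Ioo).measure_pos volume hne).ne' hnull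

section

variable {α β E : Type*} [MeasurableSpace α] [MeasurableSpace β] [NormedAddCommGroup E]
  {μ : Measure α} {ν : Measure β} [SFinite ν]

theorem MeasureTheory.IntegrableOn.prod_right_ae [SFinite μ] {f : α × β → E} {s : Set α}
    {t : Set β} (hf : IntegrableOn f (s ×ˢ t) (μ.prod ν)) :
    ∀ᵐ x ∂μ.restrict s, IntegrableOn (fun y => f (x, y)) t ν := by
  rw [IntegrableOn, ← Measure.prod_restrict] at hf
  exact hf.prod_right_ae

theorem MeasureTheory.IntegrableOn.prod_left_ae [SFinite μ] {f : α × β → E} {s : Set α}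
    {t : Set β} (hf : IntegrableOn f (s ×ˢ t) (μ.prod ν)) :
    ∀ᵐ y ∂ν.restrict t, IntegrableOn (fun x => f (x, y)) s μ := by
  rw [IntegrableOn, ← Measure.prod_restrict] at hf
  exact hf.prod_left_ae

theorem MeasureTheory.AEStronglyMeasurable.ae_eq_zero_of_ae_ae {g : α × β → E}
    (hg : AEStronglyMeasurable g (μ.prod ν)) (h : ∀ᵐ x ∂μ, ∀ᵐ y ∂ν, g (x, y) = 0) :
    ∀ᵐ p ∂μ.prod ν, g p = 0 := by
  have hmk : ∀ᵐ p ∂μ.prod ν, hg.mk g p = 0 := by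
    refine (Measure.ae_prod_iff_ae_ae
      (hg.stronglyMeasurable_mk.measurableSet_eq_fun stronglyMeasurable_const)).2 ?_
    filter_upwards [h, Measure.ae_ae_eq_curry_of_prod hg.ae_eq_mk] with x hx hxmk
    filter_upwards [hx, hxmk] with y hy hymk
    exact hymk.symm.trans hy
  filter_upwards [hg.ae_eq_mk, hmk] with p hp hpmk
  exact hp.trans hpmk

end

section

variable {E : Type*} [NormedAddCommGroup E] [NormedSpace ℝ E] [CompleteSpace E]

theorem ae_restrict_Icc_eq_zero_of_setIntegral_Ioc_eq_zero {h : ℝ → E} {a b : ℝ} {S : Set ℝ}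
    (hab : a ≤ b) (hh : IntegrableOn h (Icc a b)) (hS : S ⊆ Icc a b) (hdense : Icc a b ⊆ closure S)
    (hzero : ∀ x ∈ S, ∀ y ∈ S, x ≤ y → ∫ t in Ioc x y, h t = 0) :
    ∀ᵐ t ∂volume.restrict (Icc a b), h t = 0 := by
  set F : ℝ → E := fun x => ∫ t in a..x, h t
  have hii : IntervalIntegrable h volume a b :=
    (intervalIntegrable_iff_integrableOn_Icc_of_le hab).2 hh
  obtain ⟨s₀, hs₀⟩ : S.Nonempty := closure_nonempty_iff.1 ⟨a, hdense (left_mem_Icc.2 hab)⟩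
  have hFS : EqOn F (fun _ => F s₀) S := by
    intro x hx
    have hsub : ∀ {y}, y ∈ S → IntervalIntegrable h volume a y := fun hy =>
      hii.mono_set (by rw [uIcc_of_le hab]; exact uIcc_subset_Icc (left_mem_Icc.2 hab) (hS hy))
    rw [← sub_eq_zero, intervalIntegral.integral_interval_sub_left (hsub hx) (hsub hs₀)]
    rcases le_total s₀ x with h₀ | h₀
    · rw [intervalIntegral.integral_of_le h₀, hzero s₀ hs₀ x hx h₀]
    · rw [intervalIntegral.integral_of_ge h₀, hzero x hx s₀ hs₀ h₀, neg_zero]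
  have hF : EqOn F (fun _ => F s₀) (Icc a b) := by
    refine hFS.of_subset_closure ?_ continuousOn_const hS hdense
    simpa [uIcc_of_le hab] using intervalIntegral.continuousOn_primitive_interval (a := a) (b := b)
      (by rwa [uIcc_of_le hab])
  have hIoo : ∀ᵐ x ∂volume.restrict (Icc a b), x ∈ Ioo a b := by
    rw [← Measure.restrict_congr_set Ioo_ae_eq_Icc]
    exact ae_restrict_mem measurableSet_Ioo
  filter_upwards [ae_restrict_of_ae hii.ae_hasDerivAt_integral, hIoo] with x hderiv hx
  have hFx : F =ᶠ[𝓝 x] fun _ => F s₀ :=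
    eventuallyEq_of_mem (Ioo_mem_nhds hx.1 hx.2) fun y hy => hF (Ioo_subset_Icc_self hy)
  rw [uIcc_of_le hab] at hderiv
  exact (hderiv (Ioo_subset_Icc_self hx) a (left_mem_Icc.2 hab)).unique
    ((hasDerivAt_const x (F s₀)).congr_of_eventuallyEq hFx)

theorem ae_restrict_Icc_prod_Icc_eq_zero_of_setIntegral_Ioc_prod_Ioc_eq_zero {g : ℝ × ℝ → E}
    {a₁ b₁ a₂ b₂ : ℝ} {A B : Set ℝ} (h₁ : a₁ < b₁) (h₂ : a₂ < b₂)
    (hg : IntegrableOn g (Icc a₁ b₁ ×ˢ Icc a₂ b₂))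
    (hA : A ⊆ Icc a₁ b₁) (hA_ae : ∀ᵐ x ∂volume.restrict (Icc a₁ b₁), x ∈ A)
    (hB : B ⊆ Icc a₂ b₂) (hB_ae : ∀ᵐ y ∂volume.restrict (Icc a₂ b₂), y ∈ B)
    (hzero : ∀ x ∈ A, ∀ x' ∈ A, ∀ y ∈ B, ∀ y' ∈ B, x ≤ x' → y ≤ y' →
      ∫ p in Ioc x x' ×ˢ Ioc y y', g p = 0) :
    ∀ᵐ p ∂volume.restrict (Icc a₁ b₁ ×ˢ Icc a₂ b₂), g p = 0 := by
  have hg' : Integrable g ((volume.restrict (Icc a₁ b₁)).prod (volume.restrict (Icc a₂ b₂))) := by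
    rwa [Measure.prod_restrict]
  have hslab : ∀ y ∈ B, ∀ y' ∈ B, y ≤ y' →
      ∀ᵐ x ∂volume.restrict (Icc a₁ b₁), ∫ t in Ioc y y', g (x, t) = 0 := by
    intro y hy y' hy' hyy'
    have hsub : Icc a₁ b₁ ×ˢ Ioc y y' ⊆ Icc a₁ b₁ ×ˢ Icc a₂ b₂ :=
      prod_mono_right (Ioc_subset_Icc_self.trans (Icc_subset_Icc (hB hy).1 (hB hy').2))
    have hint : Integrable g ((volume.restrict (Icc a₁ b₁)).prod (volume.restrict (Ioc y y'))) := by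
      rw [Measure.prod_restrict]; exact hg.mono_set hsub
    refine ae_restrict_Icc_eq_zero_of_setIntegral_Ioc_eq_zero h₁.le hint.integral_prod_left hA
      (Icc_subset_closure_of_ae_mem h₁ hA_ae) fun x hx x' hx' hxx' => ?_
    rw [← setIntegral_prod g ((hg.mono_set hsub).mono_set (prod_mono_left
      (Ioc_subset_Icc_self.trans (Icc_subset_Icc (hA hx).1 (hA hx').2))))]
    exact hzero x hx x' hx' y hy y' hy' hxx' hyy'
  -- Only countably many `y, y'` may be used, so that their exceptional null sets in `x` unite.
  obtain ⟨D, hDB, hDc, hBD⟩ :=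
    (TopologicalSpace.IsSeparable.of_separableSpace B).exists_countable_dense_subset
  have hD : ∀ᵐ x ∂volume.restrict (Icc a₁ b₁), ∀ y ∈ D, ∀ y' ∈ D, y ≤ y' →
      ∫ t in Ioc y y', g (x, t) = 0 :=
    (ae_ball_iff hDc).2 fun y hy => (ae_ball_iff hDc).2 fun y' hy' =>
      eventually_imp_distrib_left.2 (hslab y (hDB hy) y' (hDB hy'))
  rw [Measure.volume_eq_prod, ← Measure.prod_restrict]
  refine hg'.aestronglyMeasurable.ae_eq_zero_of_ae_ae ?_
  filter_upwards [hD, hg'.prod_right_ae] with x hx hgx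
  exact ae_restrict_Icc_eq_zero_of_setIntegral_Ioc_eq_zero h₂.le hgx (hDB.trans hB)
    ((Icc_subset_closure_of_ae_mem h₂ hB_ae).trans (closure_minimal hBD isClosed_closure)) hx

theorem setIntegral_Ioc_prod_Ioc_eq_of_hasDerivAt_snd {f f₁ f₂₁ : ℝ → ℝ → E} {a b c d : ℝ}
    (hab : a ≤ b) (hcd : c ≤ d)
    (hf : ∀ x ∈ Icc a b, ∀ y ∈ Icc c d, HasDerivAt (f · y) (f₁ x y) x)
    (hf₁ : ∀ x ∈ Icc a b, ∀ y ∈ Icc c d, HasDerivAt (f₁ x ·) (f₂₁ x y) y)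
    (hf₁c : IntegrableOn (f₁ · c) (Icc a b)) (hf₁d : IntegrableOn (f₁ · d) (Icc a b))
    (hf₂₁ : IntegrableOn (fun p => f₂₁ p.1 p.2) (Icc a b ×ˢ Icc c d)) :
    ∫ p in Ioc a b ×ˢ Ioc c d, f₂₁ p.1 p.2 = f b d - f b c - (f a d - f a c) := by
  have hftc : ∀ {g g' : ℝ → E} {u v : ℝ}, u ≤ v → (∀ t ∈ Icc u v, HasDerivAt g (g' t) t) →
      IntegrableOn g' (Icc u v) → ∫ t in Ioc u v, g' t = g v - g u := fun huv hg hg' => by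
    rw [← intervalIntegral.integral_of_le huv]
    exact intervalIntegral.integral_eq_sub_of_hasDerivAt (by rwa [uIcc_of_le huv])
      ((intervalIntegrable_iff_integrableOn_Icc_of_le huv).2 hg')
  have hinner : ∀ᵐ x ∂volume.restrict (Ioc a b), ∫ y in Ioc c d, f₂₁ x y = f₁ x d - f₁ x c := by
    rw [Measure.restrict_congr_set (Ioc_ae_eq_Icc (a := a) (b := b))]
    filter_upwards [hf₂₁.prod_right_ae, ae_restrict_mem measurableSet_Icc] with x hx hxab
    exact hftc hcd (hf₁ x hxab) hx
  rw [Measure.volume_eq_prod,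
    setIntegral_prod _ (hf₂₁.mono_set (prod_mono Ioc_subset_Icc_self Ioc_subset_Icc_self)),
    integral_congr_ae hinner, integral_sub (hf₁d.mono_set Ioc_subset_Icc_self)
    (hf₁c.mono_set Ioc_subset_Icc_self), hftc hab (hf · · d (right_mem_Icc.2 hcd)) hf₁d,
    hftc hab (hf · · c (left_mem_Icc.2 hcd)) hf₁c]
  abel

theorem setIntegral_Ioc_prod_Ioc_eq_of_hasDerivAt_fst {f f₂ f₁₂ : ℝ → ℝ → E} {a b c d : ℝ}
    (hab : a ≤ b) (hcd : c ≤ d)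
    (hf : ∀ x ∈ Icc a b, ∀ y ∈ Icc c d, HasDerivAt (f x ·) (f₂ x y) y)
    (hf₂ : ∀ x ∈ Icc a b, ∀ y ∈ Icc c d, HasDerivAt (f₂ · y) (f₁₂ x y) x)
    (hf₂a : IntegrableOn (f₂ a ·) (Icc c d)) (hf₂b : IntegrableOn (f₂ b ·) (Icc c d))
    (hf₁₂ : IntegrableOn (fun p => f₁₂ p.1 p.2) (Icc a b ×ˢ Icc c d)) :
    ∫ p in Ioc a b ×ˢ Ioc c d, f₁₂ p.1 p.2 = f b d - f b c - (f a d - f a c) := by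
  calc ∫ p in Ioc a b ×ˢ Ioc c d, f₁₂ p.1 p.2
      = ∫ q in Ioc c d ×ˢ Ioc a b, f₁₂ q.2 q.1 := (setIntegral_prod_swap _ _ _).symm
    _ = f b d - f a d - (f b c - f a c) :=
      setIntegral_Ioc_prod_Ioc_eq_of_hasDerivAt_snd (f := fun y x => f x y) hcd hab
        (fun y hy x hx => hf x hx y hy) (fun y hy x hx => hf₂ x hx y hy) hf₂a hf₂b hf₁₂.swap
    _ = f b d - f b c - (f a d - f a c) := by abel

theorem mixed_partials_ae_eq_general (f f₁ f₂ f₁₂ f₂₁ : ℝ → ℝ → ℝ)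
    (hd1 : ∀ x₁ x₂ : ℝ, (x₁, x₂) ∈ Set.Icc (0 : ℝ) 1 ×ˢ Set.Icc (0 : ℝ) 1 →
      HasDerivAt (fun t => f t x₂) (f₁ x₁ x₂) x₁)
    (hint1 : IntegrableOn (Function.uncurry f₁) (Set.Icc (0 : ℝ) 1 ×ˢ Set.Icc (0 : ℝ) 1))
    (hd2 : ∀ x₁ x₂ : ℝ, (x₁, x₂) ∈ Set.Icc (0 : ℝ) 1 ×ˢ Set.Icc (0 : ℝ) 1 →
      HasDerivAt (fun t => f x₁ t) (f₂ x₁ x₂) x₂)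
    (hint2 : IntegrableOn (Function.uncurry f₂) (Set.Icc (0 : ℝ) 1 ×ˢ Set.Icc (0 : ℝ) 1))
    (hd12 : ∀ x₁ x₂ : ℝ, (x₁, x₂) ∈ Set.Icc (0 : ℝ) 1 ×ˢ Set.Icc (0 : ℝ) 1 →
      HasDerivAt (fun t => f₂ t x₂) (f₁₂ x₁ x₂) x₁)
    (hint12 : IntegrableOn (Function.uncurry f₁₂) (Set.Icc (0 : ℝ) 1 ×ˢ Set.Icc (0 : ℝ) 1))
    (hd21 : ∀ x₁ x₂ : ℝ, (x₁, x₂) ∈ Set.Icc (0 : ℝ) 1 ×ˢ Set.Icc (0 : ℝ) 1 →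
      HasDerivAt (fun t => f₁ x₁ t) (f₂₁ x₁ x₂) x₂)
    (hint21 : IntegrableOn (Function.uncurry f₂₁) (Set.Icc (0 : ℝ) 1 ×ˢ Set.Icc (0 : ℝ) 1)) :
    ∀ᵐ p ∂(volume.restrict (Set.Icc (0 : ℝ) 1 ×ˢ Set.Icc (0 : ℝ) 1) :
        Measure (ℝ × ℝ)), f₁₂ p.1 p.2 = f₂₁ p.1 p.2 := by
  have h12 : IntegrableOn (fun p : ℝ × ℝ => f₁₂ p.1 p.2) (Icc 0 1 ×ˢ Icc 0 1) := hint12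
  have h21 : IntegrableOn (fun p : ℝ × ℝ => f₂₁ p.1 p.2) (Icc 0 1 ×ˢ Icc 0 1) := hint21
  set G₁ := {x ∈ Icc (0 : ℝ) 1 | IntegrableOn (f₂ x ·) (Icc 0 1)}
  set G₂ := {y ∈ Icc (0 : ℝ) 1 | IntegrableOn (f₁ · y) (Icc 0 1)}
  have hG₁ : ∀ᵐ x ∂volume.restrict (Icc (0 : ℝ) 1), x ∈ G₁ :=
    (ae_restrict_mem measurableSet_Icc).and hint2.prod_right_ae
  have hG₂ : ∀ᵐ y ∂volume.restrict (Icc (0 : ℝ) 1), y ∈ G₂ :=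
    (ae_restrict_mem measurableSet_Icc).and hint1.prod_left_ae
  have hrect : ∀ a ∈ G₁, ∀ b ∈ G₁, ∀ c ∈ G₂, ∀ d ∈ G₂, a ≤ b → c ≤ d →
      ∫ p in Ioc a b ×ˢ Ioc c d, (f₁₂ p.1 p.2 - f₂₁ p.1 p.2) = 0 := by
    intro a ha b hb c hc d hd hab hcd
    have hab₀ : Icc a b ⊆ Icc 0 1 := Icc_subset_Icc ha.1.1 hb.1.2
    have hcd₀ : Icc c d ⊆ Icc 0 1 := Icc_subset_Icc hc.1.1 hd.1.2
    have hsq : Icc a b ×ˢ Icc c d ⊆ Icc 0 1 ×ˢ Icc 0 1 := prod_mono hab₀ hcd₀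
    have hmem : ∀ x ∈ Icc a b, ∀ y ∈ Icc c d, (x, y) ∈ Icc (0 : ℝ) 1 ×ˢ Icc (0 : ℝ) 1 :=
      fun x hx y hy => hsq ⟨hx, hy⟩
    have hIoc : Ioc a b ×ˢ Ioc c d ⊆ Icc 0 1 ×ˢ Icc 0 1 :=
      (Set.prod_mono Ioc_subset_Icc_self Ioc_subset_Icc_self).trans hsq
    rw [integral_sub (h12.mono_set hIoc) (h21.mono_set hIoc),
      setIntegral_Ioc_prod_Ioc_eq_of_hasDerivAt_fst hab hcd
        (fun x hx y hy => hd2 x y (hmem x hx y hy))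
        (fun x hx y hy => hd12 x y (hmem x hx y hy)) (ha.2.mono_set hcd₀) (hb.2.mono_set hcd₀)
        (h12.mono_set hsq),
      setIntegral_Ioc_prod_Ioc_eq_of_hasDerivAt_snd hab hcd
        (fun x hx y hy => hd1 x y (hmem x hx y hy))
        (fun x hx y hy => hd21 x y (hmem x hx y hy)) (hc.2.mono_set hab₀) (hd.2.mono_set hab₀)
        (h21.mono_set hsq), sub_self]
  filter_upwards [ae_restrict_Icc_prod_Icc_eq_zero_of_setIntegral_Ioc_prod_Ioc_eq_zero
    (g := fun p => f₁₂ p.1 p.2 - f₂₁ p.1 p.2) zero_lt_one zero_lt_one (h12.sub h21)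
    (fun x hx => hx.1) hG₁ (fun y hy => hy.1) hG₂ hrect] with p hp
  exact sub_eq_zero.1 hp

/-- If `f` is bounded Borel on `K = [0,1]²` (vanishing outside `K`), both classical first
partial derivatives exist everywhere on `K` and lie in `L¹(K)`, and both classical mixed
second derivatives `f_{x₁x₂} = ∂/∂x₁(∂f/∂x₂)` and `f_{x₂x₁} = ∂/∂x₂(∂f/∂x₁)` exist
everywhere on `K` and lie in `L¹(K)`, then the two mixed derivatives agree almost everywhere
on `K`. -/
theorem mixed_partials_ae_eq (f f₁ f₂ f₁₂ f₂₁ : ℝ → ℝ → ℝ) (M : ℝ)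
    (hmeas : Measurable (Function.uncurry f))
    (hbd : ∀ x₁ x₂ : ℝ, |f x₁ x₂| ≤ M)
    (hsupp : ∀ x₁ x₂ : ℝ, (x₁, x₂) ∉ Set.Icc (0 : ℝ) 1 ×ˢ Set.Icc (0 : ℝ) 1 → f x₁ x₂ = 0)
    (hd1 : ∀ x₁ x₂ : ℝ, (x₁, x₂) ∈ Set.Icc (0 : ℝ) 1 ×ˢ Set.Icc (0 : ℝ) 1 →
      HasDerivAt (fun t => f t x₂) (f₁ x₁ x₂) x₁)
    (hint1 : IntegrableOn (Function.uncurry f₁) (Set.Icc (0 : ℝ) 1 ×ˢ Set.Icc (0 : ℝ) 1))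
    (hd2 : ∀ x₁ x₂ : ℝ, (x₁, x₂) ∈ Set.Icc (0 : ℝ) 1 ×ˢ Set.Icc (0 : ℝ) 1 →
      HasDerivAt (fun t => f x₁ t) (f₂ x₁ x₂) x₂)
    (hint2 : IntegrableOn (Function.uncurry f₂) (Set.Icc (0 : ℝ) 1 ×ˢ Set.Icc (0 : ℝ) 1))
    (hd12 : ∀ x₁ x₂ : ℝ, (x₁, x₂) ∈ Set.Icc (0 : ℝ) 1 ×ˢ Set.Icc (0 : ℝ) 1 →
      HasDerivAt (fun t => f₂ t x₂) (f₁₂ x₁ x₂) x₁)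
    (hint12 : IntegrableOn (Function.uncurry f₁₂) (Set.Icc (0 : ℝ) 1 ×ˢ Set.Icc (0 : ℝ) 1))
    (hd21 : ∀ x₁ x₂ : ℝ, (x₁, x₂) ∈ Set.Icc (0 : ℝ) 1 ×ˢ Set.Icc (0 : ℝ) 1 →
      HasDerivAt (fun t => f₁ x₁ t) (f₂₁ x₁ x₂) x₂)
    (hint21 : IntegrableOn (Function.uncurry f₂₁) (Set.Icc (0 : ℝ) 1 ×ˢ Set.Icc (0 : ℝ) 1)) :
    ∀ᵐ p ∂(volume.restrict (Set.Icc (0 : ℝ) 1 ×ˢ Set.Icc (0 : ℝ) 1) :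
        Measure (ℝ × ℝ)), f₁₂ p.1 p.2 = f₂₁ p.1 p.2 :=
  mixed_partials_ae_eq_general f f₁ f₂ f₁₂ f₂₁ hd1 hint1 hd2 hint2 hd12 hint12 hd21 hint21
end
end

section
/- For the two-variable Bernstein polynomial B_n(f,x₁,x₂) = Σ_{k₁,k₂=0}^n f(k₁/n, k₂/n) C(n,k₁)C(n,k₂) x₁^{k₁}(1−x₁)^{n−k₁} x₂^{k₂}(1−x₂)^{n−k₂}: if f : ℝ² → ℝ has a continuous mixed partial derivative ∂²f/∂x₁∂x₂ on ℝ², then ∂²B_n(f,·,·)/∂x₁∂x₂ converges to ∂²f/∂x₁∂x₂ uniformly on [0,1]² as n → ∞. -/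
/-!
Differentiating a Bernstein sum of degree `n + 1` gives the degree-`n` Bernstein sum of the scaled
forward differences `(n + 1) (c (k + 1) - c k)` of its coefficients. Hence `∂₁∂₂ B_{m+1} f` is the
degree-`m` tensor Bernstein sum of the mixed second differences `(m + 1)² Δ₁Δ₂ f` on the grid of
mesh `1 / (m + 1)`, and by the mean value theorem, applied once in each variable, each of these
equals `f₁₂ (ξ, η)` at a point of the corresponding grid cell. The cell of index `k` contains
`k / m`, so the variance identity `∑ₖ (k / m - x)² b_{m,k}(x) = x (1 - x) / m` makes this weighted
average of `f₁₂` converge to `f₁₂` uniformly, as in Bernstein's proof of the Weierstrass theorem.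
-/

open MeasureTheory Filter Set

noncomputable def bernstein2d (f : ℝ → ℝ → ℝ) (n : ℕ) (x₁ x₂ : ℝ) : ℝ :=
  ∑ k₁ ∈ Finset.range (n + 1), ∑ k₂ ∈ Finset.range (n + 1),
    f ((k₁ : ℝ) / n) ((k₂ : ℝ) / n) * (n.choose k₁ : ℝ) * (n.choose k₂ : ℝ) *
      x₁ ^ k₁ * (1 - x₁) ^ (n - k₁) * x₂ ^ k₂ * (1 - x₂) ^ (n - k₂)

noncomputable def bernsteinSum (n : ℕ) (c : ℕ → ℝ) (x : ℝ) : ℝ :=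
  ∑ k ∈ Finset.range (n + 1), c k * (bernsteinPolynomial ℝ n k).eval x

namespace bernsteinSum

variable {n : ℕ} {c d : ℕ → ℝ} {x : ℝ}

theorem const (r : ℝ) : bernsteinSum n (fun _ => r) x = r := by
  rw [bernsteinSum, ← Finset.mul_sum, ← Polynomial.eval_finsetSum, bernsteinPolynomial.sum,
    Polynomial.eval_one, mul_one]

theorem add :
    bernsteinSum n (fun k => c k + d k) x = bernsteinSum n c x + bernsteinSum n d x := by
  simp only [bernsteinSum, add_mul, Finset.sum_add_distrib]

theorem sub :
    bernsteinSum n (fun k => c k - d k) x = bernsteinSum n c x - bernsteinSum n d x := by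
  simp only [bernsteinSum, sub_mul, Finset.sum_sub_distrib]

theorem const_mul (r : ℝ) : bernsteinSum n (fun k => r * c k) x = r * bernsteinSum n c x := by
  simp only [bernsteinSum, mul_assoc, Finset.mul_sum]

theorem abs_le_of_abs_le (hx : x ∈ Icc (0 : ℝ) 1) (h : ∀ k ≤ n, |c k| ≤ d k) :
    |bernsteinSum n c x| ≤ bernsteinSum n d x :=
  (Finset.abs_sum_le_sum_abs _ _).trans <| Finset.sum_le_sum fun k hk => by
    have hb : 0 ≤ (bernsteinPolynomial ℝ n k).eval x := bernstein_nonneg (x := ⟨x, hx⟩)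
    rw [abs_mul, abs_of_nonneg hb]
    exact mul_le_mul_of_nonneg_right (h k (Nat.lt_succ_iff.1 (Finset.mem_range.1 hk))) hb

theorem sq_sub (hn : n ≠ 0) :
    bernsteinSum n (fun k => (k / n - x) ^ 2) x = x * (1 - x) / n := by
  have h := congrArg (Polynomial.eval x) (bernsteinPolynomial.variance ℝ n)
  simp only [Polynomial.eval_finsetSum, Polynomial.eval_mul, Polynomial.eval_pow,
    Polynomial.eval_sub, Polynomial.eval_X, Polynomial.eval_natCast, Polynomial.eval_one,
    nsmul_eq_mul] at h
  have hn' : (n : ℝ) ≠ 0 := Nat.cast_ne_zero.2 hn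
  calc bernsteinSum n (fun k => (k / n - x) ^ 2) x
      = (∑ k ∈ Finset.range (n + 1), (n * x - k) ^ 2 * (bernsteinPolynomial ℝ n k).eval x) /
          n ^ 2 := by
        rw [bernsteinSum, Finset.sum_div]
        refine Finset.sum_congr rfl fun k _ => ?_
        field_simp
        ring
    _ = x * (1 - x) / n := by
        rw [h]
        field_simp

theorem hasDerivAt_succ (n : ℕ) (c : ℕ → ℝ) (x : ℝ) :
    HasDerivAt (bernsteinSum (n + 1) c)
      (bernsteinSum n (fun k => (n + 1) * (c (k + 1) - c k)) x) x := by
  have hsum := HasDerivAt.fun_sum (u := Finset.range (n + 2)) fun k _ =>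
    ((bernsteinPolynomial ℝ (n + 1) k).hasDerivAt x).const_mul (c k)
  refine hsum.congr_deriv ?_
  rw [Finset.sum_range_succ', bernsteinSum]
  simp only [bernsteinPolynomial.derivative_succ, bernsteinPolynomial.derivative_zero,
    Nat.add_sub_cancel, Polynomial.eval_mul, Polynomial.eval_sub, Polynomial.eval_neg,
    Polynomial.eval_add, Polynomial.eval_one, Polynomial.eval_natCast, Nat.cast_add, Nat.cast_one]
  obtain ⟨β, hβ⟩ : ∃ β : ℕ → ℝ, ∀ k, (bernsteinPolynomial ℝ n k).eval x = β k := ⟨_, fun _ => rfl⟩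
  simp only [hβ]
  -- summation by parts; the boundary term vanishes as `β (n + 1) = 0`
  have hshift : ∑ k ∈ Finset.range (n + 1), c (k + 1) * β (k + 1) + c 0 * β 0 =
      ∑ k ∈ Finset.range (n + 1), c k * β k := by
    rw [← Finset.sum_range_succ' (fun k => c k * β k), Finset.sum_range_succ, ← hβ,
      bernsteinPolynomial.eq_zero_of_lt ℝ (Nat.lt_succ_self n), Polynomial.eval_zero, mul_zero,
      add_zero]
  have hlhs : ∑ k ∈ Finset.range (n + 1), c (k + 1) * ((n + 1) * (β k - β (k + 1))) =
      (n + 1) * (∑ k ∈ Finset.range (n + 1), c (k + 1) * β k -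
        ∑ k ∈ Finset.range (n + 1), c (k + 1) * β (k + 1)) := by
    rw [mul_sub, Finset.mul_sum, Finset.mul_sum, ← Finset.sum_sub_distrib]
    exact Finset.sum_congr rfl fun k _ => by ring
  have hrhs : ∑ k ∈ Finset.range (n + 1), (n + 1) * (c (k + 1) - c k) * β k =
      (n + 1) * (∑ k ∈ Finset.range (n + 1), c (k + 1) * β k -
        ∑ k ∈ Finset.range (n + 1), c k * β k) := by
    rw [mul_sub, Finset.mul_sum, Finset.mul_sum, ← Finset.sum_sub_distrib]
    exact Finset.sum_congr rfl fun k _ => by ring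
  rw [hlhs, hrhs]
  linear_combination (-(n + 1 : ℝ)) * hshift

end bernsteinSum

noncomputable def bernsteinSum₂ (n₁ n₂ : ℕ) (a : ℕ → ℕ → ℝ) (x₁ x₂ : ℝ) : ℝ :=
  bernsteinSum n₁ (fun i => bernsteinSum n₂ (a i) x₂) x₁

theorem bernstein2d_eq_bernsteinSum₂ (f : ℝ → ℝ → ℝ) (n : ℕ) (x₁ x₂ : ℝ) :
    bernstein2d f n x₁ x₂ = bernsteinSum₂ n n (fun i j => f (i / n) (j / n)) x₁ x₂ := by
  simp only [bernstein2d, bernsteinSum₂, bernsteinSum, Finset.sum_mul, bernsteinPolynomial,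
    Polynomial.eval_mul, Polynomial.eval_pow, Polynomial.eval_sub, Polynomial.eval_one,
    Polynomial.eval_X, Polynomial.eval_natCast]
  exact Finset.sum_congr rfl fun _ _ => Finset.sum_congr rfl fun _ _ => by ring

namespace bernsteinSum₂

theorem hasDerivAt_snd (n₁ n₂ : ℕ) (a : ℕ → ℕ → ℝ) (x₁ x₂ : ℝ) :
    HasDerivAt (fun t => bernsteinSum₂ n₁ (n₂ + 1) a x₁ t)
      (bernsteinSum₂ n₁ n₂ (fun i j => (n₂ + 1) * (a i (j + 1) - a i j)) x₁ x₂) x₂ :=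
  HasDerivAt.fun_sum (u := Finset.range (n₁ + 1)) fun i _ =>
    (bernsteinSum.hasDerivAt_succ n₂ (a i) x₂).mul_const ((bernsteinPolynomial ℝ n₁ i).eval x₁)

theorem hasDerivAt_fst (n₁ n₂ : ℕ) (a : ℕ → ℕ → ℝ) (x₁ x₂ : ℝ) :
    HasDerivAt (fun s => bernsteinSum₂ (n₁ + 1) n₂ a s x₂)
      (bernsteinSum₂ n₁ n₂ (fun i j => (n₁ + 1) * (a (i + 1) j - a i j)) x₁ x₂) x₁ := by
  refine (bernsteinSum.hasDerivAt_succ n₁ (fun i => bernsteinSum n₂ (a i) x₂) x₁).congr_deriv ?_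
  simp only [bernsteinSum₂, bernsteinSum.const_mul, bernsteinSum.sub]

theorem deriv_deriv (m : ℕ) (a : ℕ → ℕ → ℝ) (x₁ x₂ : ℝ) :
    deriv (fun s => deriv (fun t => bernsteinSum₂ (m + 1) (m + 1) a s t) x₂) x₁ =
      bernsteinSum₂ m m
        (fun i j => (m + 1) ^ 2 * (a (i + 1) (j + 1) - a (i + 1) j - a i (j + 1) + a i j))
        x₁ x₂ := by
  simp only [(hasDerivAt_snd _ _ a _ x₂).deriv, (hasDerivAt_fst m m _ x₁ x₂).deriv]
  congr 1
  ext i j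
  ring

theorem abs_le_of_abs_le {n₁ n₂ : ℕ} {a b : ℕ → ℕ → ℝ} {x₁ x₂ : ℝ} (hx₁ : x₁ ∈ Icc (0 : ℝ) 1)
    (hx₂ : x₂ ∈ Icc (0 : ℝ) 1) (h : ∀ i ≤ n₁, ∀ j ≤ n₂, |a i j| ≤ b i j) :
    |bernsteinSum₂ n₁ n₂ a x₁ x₂| ≤ bernsteinSum₂ n₁ n₂ b x₁ x₂ :=
  bernsteinSum.abs_le_of_abs_le hx₁ fun i hi => bernsteinSum.abs_le_of_abs_le hx₂ (h i hi)

end bernsteinSum₂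

theorem exists_mixed_difference_eq {f f₂ f₁₂ : ℝ → ℝ → ℝ}
    (hd2 : ∀ x₁ x₂ : ℝ, HasDerivAt (fun t => f x₁ t) (f₂ x₁ x₂) x₂)
    (hd12 : ∀ x₁ x₂ : ℝ, HasDerivAt (fun t => f₂ t x₂) (f₁₂ x₁ x₂) x₁)
    {a₁ b₁ a₂ b₂ : ℝ} (h₁ : a₁ < b₁) (h₂ : a₂ < b₂) :
    ∃ ξ ∈ Ioo a₁ b₁, ∃ η ∈ Ioo a₂ b₂,
      f b₁ b₂ - f b₁ a₂ - f a₁ b₂ + f a₁ a₂ = (b₁ - a₁) * (b₂ - a₂) * f₁₂ ξ η := by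
  obtain ⟨η, hη, hη_eq⟩ := exists_hasDerivAt_eq_slope (fun t => f b₁ t - f a₁ t)
    (fun t => f₂ b₁ t - f₂ a₁ t) h₂
    (continuous_iff_continuousAt.2 fun t => ((hd2 b₁ t).sub (hd2 a₁ t)).continuousAt).continuousOn
    fun t _ => (hd2 b₁ t).sub (hd2 a₁ t)
  obtain ⟨ξ, hξ, hξ_eq⟩ := exists_hasDerivAt_eq_slope (fun s => f₂ s η) (fun s => f₁₂ s η) h₁
    (continuous_iff_continuousAt.2 fun s => (hd12 s η).continuousAt).continuousOn
    fun s _ => hd12 s η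
  refine ⟨ξ, hξ, η, hη, ?_⟩
  rw [eq_div_iff (sub_ne_zero.2 h₂.ne')] at hη_eq
  rw [eq_div_iff (sub_ne_zero.2 h₁.ne')] at hξ_eq
  linear_combination -hη_eq - (b₂ - a₂) * hξ_eq

section Grid

variable {m k : ℕ} {ξ : ℝ}

theorem div_mem_Icc_div_add_one (hk : k ≤ m) :
    (k : ℝ) / m ∈ Icc ((k : ℝ) / (m + 1)) ((k + 1) / (m + 1)) := by
  rcases Nat.eq_zero_or_pos m with rfl | hm
  · simp [Nat.le_zero.1 hk]
  have hm' : (0 : ℝ) < m := Nat.cast_pos.2 hm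
  have hk' : (k : ℝ) ≤ m := Nat.cast_le.2 hk
  refine ⟨div_le_div_of_nonneg_left k.cast_nonneg hm' (by linarith), ?_⟩
  rw [div_le_div_iff₀ hm' (by linarith)]
  linarith

theorem mem_Icc_of_mem_Icc_div_add_one (hk : k ≤ m)
    (hξ : ξ ∈ Icc ((k : ℝ) / (m + 1)) ((k + 1) / (m + 1))) : ξ ∈ Icc (0 : ℝ) 1 :=
  Icc_subset_Icc (by positivity)
    ((div_le_one (by positivity)).2 (by exact_mod_cast Nat.succ_le_succ hk)) hξ

theorem sq_sub_le_of_mem_Icc_div_add_one (hk : k ≤ m)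
    (hξ : ξ ∈ Icc ((k : ℝ) / (m + 1)) ((k + 1) / (m + 1))) (x : ℝ) :
    (x - ξ) ^ 2 ≤ 2 * ((k : ℝ) / m - x) ^ 2 + 2 / (m + 1) ^ 2 := by
  have hdist : |ξ - k / m| ≤ 1 / (m + 1) := by
    have := Real.dist_le_of_mem_Icc hξ (div_mem_Icc_div_add_one hk)
    rwa [Real.dist_eq, ← sub_div, add_sub_cancel_left] at this
  have hsq : (ξ - k / m) ^ 2 ≤ 1 / (m + 1) ^ 2 := by
    rw [← sq_abs, one_div, ← inv_pow, ← one_div]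
    exact pow_le_pow_left₀ (abs_nonneg _) hdist 2
  calc (x - ξ) ^ 2 ≤ 2 * ((k : ℝ) / m - x) ^ 2 + 2 * (ξ - k / m) ^ 2 := by
        nlinarith [sq_nonneg (x - k / m + (ξ - k / m))]
    _ ≤ 2 * ((k : ℝ) / m - x) ^ 2 + 2 / (m + 1) ^ 2 := by
        linarith [mul_one_div (2 : ℝ) ((m + 1) ^ 2)]

end Grid

theorem bernsteinSum.two_mul_sq_sub_add_le {m : ℕ} (hm : m ≠ 0) (x : ℝ) :
    bernsteinSum m (fun k => 2 * ((k : ℝ) / m - x) ^ 2 + 2 / (m + 1) ^ 2) x ≤ 2 / (m + 1) := by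
  simp only [bernsteinSum.add, bernsteinSum.const_mul, bernsteinSum.sq_sub hm, bernsteinSum.const]
  have hm1 : (1 : ℝ) ≤ m := Nat.one_le_cast.2 (Nat.one_le_iff_ne_zero.2 hm)
  have hx4 : x * (1 - x) ≤ 1 / 4 := by nlinarith [sq_nonneg (x - 1 / 2)]
  have h₁ : 2 * (x * (1 - x) / m) ≤ 1 / (m + 1) := by
    rw [mul_div_assoc', div_le_div_iff₀ (by positivity) (by positivity)]
    nlinarith
  have h₂ : 2 / ((m : ℝ) + 1) ^ 2 ≤ 1 / (m + 1) := by
    rw [div_le_div_iff₀ (by positivity) (by positivity)]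
    nlinarith
  linarith [show (2 : ℝ) / (m + 1) = 1 / (m + 1) + 1 / (m + 1) by ring]

theorem IsCompact.exists_abs_sub_le_add_mul_dist_sq {α : Type*} [PseudoMetricSpace α]
    {s : Set α} {g : α → ℝ} (hs : IsCompact s) (hg : ContinuousOn g s) {ε : ℝ} (hε : 0 < ε) :
    ∃ c, 0 ≤ c ∧ ∀ u ∈ s, ∀ v ∈ s, |g u - g v| ≤ ε + c * dist u v ^ 2 := by
  obtain ⟨M, hM⟩ := hs.exists_bound_of_continuousOn hg
  obtain ⟨δ, hδ, hδg⟩ :=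
    Metric.uniformContinuousOn_iff.1 (hs.uniformContinuousOn_of_continuous hg) ε hε
  refine ⟨2 * |M| / δ ^ 2, by positivity, fun u hu v hv => ?_⟩
  have hc : 0 ≤ 2 * |M| / δ ^ 2 * dist u v ^ 2 := by positivity
  rcases lt_or_ge (dist u v) δ with hclose | hfar
  · have := hδg u hu v hv hclose
    rw [Real.dist_eq] at this
    linarith
  -- far apart, the oscillation `2 |M|` is dominated by the quadratic term
  calc |g u - g v| ≤ |g u| + |g v| := abs_sub _ _
    _ ≤ 2 * |M| := by linarith [hM u hu, hM v hv, le_abs_self M, Real.norm_eq_abs (g u),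
        Real.norm_eq_abs (g v)]
    _ = 2 * |M| / δ ^ 2 * δ ^ 2 := by field_simp
    _ ≤ 2 * |M| / δ ^ 2 * dist u v ^ 2 := by gcongr
    _ ≤ ε + 2 * |M| / δ ^ 2 * dist u v ^ 2 := by linarith

theorem Prod.dist_sq_le {α β : Type*} [PseudoMetricSpace α] [PseudoMetricSpace β] (u v : α × β) :
    dist u v ^ 2 ≤ dist u.1 v.1 ^ 2 + dist u.2 v.2 ^ 2 := by
  rw [Prod.dist_eq]
  rcases le_total (dist u.1 v.1) (dist u.2 v.2) with h | h
  · rw [max_eq_right h]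
    exact le_add_of_nonneg_left (sq_nonneg _)
  · rw [max_eq_left h]
    exact le_add_of_nonneg_right (sq_nonneg _)

theorem abs_sub_deriv_deriv_bernstein2d_le {f f₂ f₁₂ : ℝ → ℝ → ℝ}
    (hd2 : ∀ x₁ x₂ : ℝ, HasDerivAt (fun t => f x₁ t) (f₂ x₁ x₂) x₂)
    (hd12 : ∀ x₁ x₂ : ℝ, HasDerivAt (fun t => f₂ t x₂) (f₁₂ x₁ x₂) x₁) {e c : ℝ} (hc : 0 ≤ c)
    (hmod : ∀ u ∈ Icc (0 : ℝ) 1 ×ˢ Icc (0 : ℝ) 1, ∀ v ∈ Icc (0 : ℝ) 1 ×ˢ Icc (0 : ℝ) 1,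
      |Function.uncurry f₁₂ u - Function.uncurry f₁₂ v| ≤ e + c * dist u v ^ 2)
    {m : ℕ} (hm : m ≠ 0) {x₁ x₂ : ℝ} (hx₁ : x₁ ∈ Icc (0 : ℝ) 1) (hx₂ : x₂ ∈ Icc (0 : ℝ) 1) :
    |f₁₂ x₁ x₂ - deriv (fun s => deriv (fun t => bernstein2d f (m + 1) s t) x₂) x₁| ≤
      e + 4 * c / (m + 1) := by
  have hstep (k : ℕ) : (k : ℝ) / (m + 1) < (k + 1) / (m + 1) := by gcongr; linarith
  choose ξ hξ η hη hmvt using fun i j : ℕ =>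
    exists_mixed_difference_eq hd2 hd12 (hstep i) (hstep j)
  have hderiv : deriv (fun s => deriv (fun t => bernstein2d f (m + 1) s t) x₂) x₁ =
      bernsteinSum₂ m m (fun i j => f₁₂ (ξ i j) (η i j)) x₁ x₂ := by
    simp_rw [bernstein2d_eq_bernsteinSum₂, bernsteinSum₂.deriv_deriv]
    congr 1
    ext i j
    push_cast
    rw [hmvt i j]
    field_simp
    ring
  have hdiff : f₁₂ x₁ x₂ - bernsteinSum₂ m m (fun i j => f₁₂ (ξ i j) (η i j)) x₁ x₂ =
      bernsteinSum₂ m m (fun i j => f₁₂ x₁ x₂ - f₁₂ (ξ i j) (η i j)) x₁ x₂ := by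
    simp only [bernsteinSum₂, bernsteinSum.sub, bernsteinSum.const]
  have hpoint : ∀ i ≤ m, ∀ j ≤ m, |f₁₂ x₁ x₂ - f₁₂ (ξ i j) (η i j)| ≤
      e + c * (2 * ((i : ℝ) / m - x₁) ^ 2 + 2 / (m + 1) ^ 2) +
        c * (2 * ((j : ℝ) / m - x₂) ^ 2 + 2 / (m + 1) ^ 2) := by
    intro i hi j hj
    have hξ' := Ioo_subset_Icc_self (hξ i j)
    have hη' := Ioo_subset_Icc_self (hη i j)
    have hdist := Prod.dist_sq_le (x₁, x₂) (ξ i j, η i j)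
    simp only [Real.dist_eq, sq_abs] at hdist
    have hosc := hmod (x₁, x₂) ⟨hx₁, hx₂⟩ (ξ i j, η i j)
      ⟨mem_Icc_of_mem_Icc_div_add_one hi hξ', mem_Icc_of_mem_Icc_div_add_one hj hη'⟩
    have hquad := mul_le_mul_of_nonneg_left (hdist.trans (add_le_add
      (sq_sub_le_of_mem_Icc_div_add_one hi hξ' x₁) (sq_sub_le_of_mem_Icc_div_add_one hj hη' x₂))) hc
    rw [Function.uncurry_apply_pair, Function.uncurry_apply_pair] at hosc
    linarith
  rw [hderiv, hdiff]
  calc _ ≤ bernsteinSum₂ m m (fun i j => e + c * (2 * ((i : ℝ) / m - x₁) ^ 2 + 2 / (m + 1) ^ 2) +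
        c * (2 * ((j : ℝ) / m - x₂) ^ 2 + 2 / (m + 1) ^ 2)) x₁ x₂ :=
        bernsteinSum₂.abs_le_of_abs_le hx₁ hx₂ hpoint
    _ = e + c * bernsteinSum m (fun i => 2 * ((i : ℝ) / m - x₁) ^ 2 + 2 / (m + 1) ^ 2) x₁ +
        c * bernsteinSum m (fun j => 2 * ((j : ℝ) / m - x₂) ^ 2 + 2 / (m + 1) ^ 2) x₂ := by
        simp only [bernsteinSum₂, bernsteinSum.add, bernsteinSum.const, bernsteinSum.const_mul]
    _ ≤ e + c * (2 / (m + 1)) + c * (2 / (m + 1)) := by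
        gcongr <;> exact bernsteinSum.two_mul_sq_sub_add_le hm _
    _ = e + 4 * c / (m + 1) := by ring

theorem bernstein2d_mixed_deriv_tendstoUniformlyOn_general (f f₂ f₁₂ : ℝ → ℝ → ℝ)
    (hd2 : ∀ x₁ x₂ : ℝ, HasDerivAt (fun t => f x₁ t) (f₂ x₁ x₂) x₂)
    (hd12 : ∀ x₁ x₂ : ℝ, HasDerivAt (fun t => f₂ t x₂) (f₁₂ x₁ x₂) x₁)
    (hcont : Continuous (Function.uncurry f₁₂)) :
    TendstoUniformlyOn
      (fun n (p : ℝ × ℝ) =>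
        deriv (fun s => deriv (fun t => bernstein2d f n s t) p.2) p.1)
      (fun p => f₁₂ p.1 p.2) atTop (Set.Icc (0 : ℝ) 1 ×ˢ Set.Icc (0 : ℝ) 1) := by
  rw [Metric.tendstoUniformlyOn_iff]
  intro ε hε
  obtain ⟨c, hc, hmod⟩ := (isCompact_Icc.prod isCompact_Icc).exists_abs_sub_le_add_mul_dist_sq
    hcont.continuousOn (half_pos hε)
  have hsmall : ∀ᶠ n : ℕ in atTop, 4 * c / n < ε / 2 :=
    (tendsto_const_div_atTop_nhds_zero_nat (4 * c)).eventually (gt_mem_nhds (half_pos hε))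
  filter_upwards [hsmall, eventually_ge_atTop 2] with n hn hn2 p hp
  obtain ⟨m, rfl⟩ : ∃ m, n = m + 1 := ⟨n - 1, by omega⟩
  have hbound := abs_sub_deriv_deriv_bernstein2d_le hd2 hd12 hc hmod (m := m) (by omega) hp.1 hp.2
  rw [Real.dist_eq]
  push_cast at hn
  linarith

/-- If `f : ℝ² → ℝ` is continuous and has an (everywhere existing) continuous mixed partial
derivative `f₁₂ = ∂/∂x₁(∂f/∂x₂)` on `ℝ²`, then the mixed derivatives
`∂²Bₙ(f,·,·)/∂x₁∂x₂` of the two-variable Bernstein polynomials converge to `f₁₂`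
uniformly on `[0,1]²` as `n → ∞`. -/
theorem bernstein2d_mixed_deriv_tendstoUniformlyOn (f f₂ f₁₂ : ℝ → ℝ → ℝ)
    (hf : Continuous (Function.uncurry f))
    (hd2 : ∀ x₁ x₂ : ℝ, HasDerivAt (fun t => f x₁ t) (f₂ x₁ x₂) x₂)
    (hd12 : ∀ x₁ x₂ : ℝ, HasDerivAt (fun t => f₂ t x₂) (f₁₂ x₁ x₂) x₁)
    (hcont : Continuous (Function.uncurry f₁₂)) :
    TendstoUniformlyOn
      (fun n (p : ℝ × ℝ) =>
        deriv (fun s => deriv (fun t => bernstein2d f n s t) p.2) p.1)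
      (fun p => f₁₂ p.1 p.2) atTop (Set.Icc (0 : ℝ) 1 ×ˢ Set.Icc (0 : ℝ) 1) :=
  bernstein2d_mixed_deriv_tendstoUniformlyOn_general f f₂ f₁₂ hd2 hd12 hcont
end
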